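/- arXiv:2507.09193 — 2 statements merged into one kernel-verified Lean document; each statement's English description precedes it below -/
import Mathlib

section
/- Let X, X₁ be binary random variables and N, S independent binary noise variables with H(S)=1, where Y₁ = X₁ ⊕ S and Y = (X ⊕ X₁, X ⊕ N), with (U,A) auxiliary random variables such that X₁ − (U,A) − (X,N) forms a Markov chain and (S,N) independent of (U,A,X,X₁). If H(X₁ | U, A) = 1 and H(X₁ | U, A, X⊕X₁, X⊕N) = 0, then H(X | U, A) + H(N) = H(X ⊕ N | U, A). -/
open Finset
open scoped Classical

namespace ISAC

variable {Ω : Type*} [Fintype Ω]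

/-- `p` is a probability mass function on the finite sample space `Ω`. -/
def IsPMF (p : Ω → ℝ) : Prop := (∀ ω, 0 ≤ p ω) ∧ ∑ ω, p ω = 1

/-- Probability that the random variable `X` takes the value `x`. -/
noncomputable def pr (p : Ω → ℝ) {α : Type*} (X : Ω → α) (x : α) : ℝ :=
  ∑ ω, if X ω = x then p ω else 0

/-- Shannon entropy (in bits) of the random variable `X`. -/
noncomputable def ent (p : Ω → ℝ) {α : Type*} [Fintype α] (X : Ω → α) : ℝ :=
  -∑ x, pr p X x * Real.logb 2 (pr p X x)

/-- Conditional entropy `H(X | Z)`. -/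
noncomputable def condEnt (p : Ω → ℝ) {α β : Type*} [Fintype α] [Fintype β] (X : Ω → α) (Z : Ω → β) : ℝ :=
  ent p (fun ω => (X ω, Z ω)) - ent p Z

/-- Mutual information `I(X;Y)`. -/
noncomputable def mi (p : Ω → ℝ) {α β : Type*} [Fintype α] [Fintype β] (X : Ω → α) (Y : Ω → β) : ℝ :=
  ent p X + ent p Y - ent p (fun ω => (X ω, Y ω))

/-- Conditional mutual information `I(X;Y|Z)`. -/
noncomputable def cmi (p : Ω → ℝ) {α β γ : Type*} [Fintype α] [Fintype β] [Fintype γ] (X : Ω → α) (Y : Ω → β) (Z : Ω → γ) : ℝ :=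
  ent p (fun ω => (X ω, Z ω)) + ent p (fun ω => (Y ω, Z ω))
    - ent p (fun ω => (X ω, Y ω, Z ω)) - ent p Z

/-- The Markov chain `A − B − C`: `A` and `C` are conditionally independent given `B`. -/
def Markov (p : Ω → ℝ) {α β γ : Type*} (A : Ω → α) (B : Ω → β) (C : Ω → γ) : Prop :=
  ∀ a b c, pr p (fun ω => (A ω, B ω, C ω)) (a, b, c) * pr p B b
    = pr p (fun ω => (A ω, B ω)) (a, b) * pr p (fun ω => (B ω, C ω)) (b, c)

/-- Independence of the random variables `A` and `B`. -/
def IndepRV (p : Ω → ℝ) {α β : Type*} (A : Ω → α) (B : Ω → β) : Prop :=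
  ∀ a b, pr p (fun ω => (A ω, B ω)) (a, b) = pr p A a * pr p B b

/-- Expectation of a real-valued function of the outcome. -/
noncomputable def expect (p : Ω → ℝ) (f : Ω → ℝ) : ℝ := ∑ ω, p ω * f ω

end ISAC

/-! Since `H(X₁ | U,A) = 1`, the bit `X₁` is uniform given `(U,A)`, and by the Markov chain it
stays uniform given `(U,A,X,N)`: both values of `X₁` occur with every atom of `(U,A,X,N)`.
Because `X₁` is a function of `(U,A,X⊕X₁,X⊕N)`, comparing two outcomes with the same
`(U,A,X⊕N)` after choosing `X₁ = X` on both shows that `X` is a function of `(U,A,X⊕N)`.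
So `(X⊕N,U,A)` is an invertible recoding of `(N,X,U,A)`, and since `N` is independent of
`(X,U,A)`, `H(X⊕N,U,A) = H(N) + H(X,U,A)`. -/

open Real

namespace ISAC

variable {Ω α β γ δ : Type*} {p : Ω → ℝ}

def DeterminedBy (p : Ω → ℝ) (X : Ω → α) (Z : Ω → β) : Prop :=
  ∀ ω ω', p ω ≠ 0 → p ω' ≠ 0 → Z ω = Z ω' → X ω = X ω'

lemma DeterminedBy.of_comp {X : Ω → α} {Z : Ω → β} (e : β → γ)
    (h : DeterminedBy p X (fun ω => e (Z ω))) : DeterminedBy p X Z :=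
  fun ω ω' hω hω' hZ => h ω ω' hω hω' (congrArg e hZ)

section Fintype

variable [Fintype Ω]

lemma pr_nonneg (hp : IsPMF p) (F : Ω → α) (a : α) : 0 ≤ pr p F a :=
  sum_nonneg fun ω _ => by split_ifs <;> simp [hp.1 ω]

lemma sum_pr (hp : IsPMF p) [Fintype α] (F : Ω → α) : ∑ a, pr p F a = 1 := by
  unfold pr
  rw [sum_comm]
  simp [hp.2]

lemma pr_comp [Fintype α] [DecidableEq β] (T : Ω → α) (f : α → β) (b : β) :
    pr p (fun ω => f (T ω)) b = ∑ a with f a = b, pr p T a := by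
  unfold pr
  rw [sum_comm]
  refine sum_congr rfl fun ω _ => ?_
  rw [sum_ite_eq]
  simp

lemma sum_pr_pair [Fintype α] (F : Ω → α) (G : Ω → β) (b : β) :
    ∑ a, pr p (fun ω => (F ω, G ω)) (a, b) = pr p G b := by
  unfold pr
  rw [sum_comm]
  refine sum_congr rfl fun ω _ => ?_
  by_cases h : G ω = b <;> simp [Prod.ext_iff, h]

lemma exists_of_pr_ne_zero {F : Ω → α} {a : α} (h : pr p F a ≠ 0) :
    ∃ ω, p ω ≠ 0 ∧ F ω = a := by
  obtain ⟨ω, -, hω⟩ := exists_ne_zero_of_sum_ne_zero h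
  by_cases hF : F ω = a
  · exact ⟨ω, by simpa [hF] using hω, hF⟩
  · simp [hF] at hω

lemma pr_apply_ne_zero (hp : IsPMF p) (F : Ω → α) {ω : Ω} (hω : p ω ≠ 0) :
    pr p F (F ω) ≠ 0 := by
  refine (lt_of_lt_of_le (lt_of_le_of_ne (hp.1 ω) hω.symm) ?_).ne'
  simpa [pr] using single_le_sum (f := fun ω' => if F ω' = F ω then p ω' else 0)
    (fun ω' _ => by split_ifs <;> simp [hp.1 ω']) (mem_univ ω)

lemma pr_pair_le (hp : IsPMF p) [Fintype α] (F : Ω → α) (G : Ω → β) (a : α) (b : β) :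
    pr p (fun ω => (F ω, G ω)) (a, b) ≤ pr p G b := by
  rw [← sum_pr_pair F G b]
  exact single_le_sum (f := fun a' => pr p (fun ω => (F ω, G ω)) (a', b))
    (fun a' _ => pr_nonneg hp _ _) (mem_univ a)

lemma IndepRV.comp [Fintype α] [Fintype β] {A : Ω → α} {B : Ω → β} (h : IndepRV p A B)
    (f : α → γ) (g : β → δ) : IndepRV p (fun ω => f (A ω)) (fun ω => g (B ω)) := by
  intro c d
  calc pr p (fun ω => (f (A ω), g (B ω))) (c, d)
      = ∑ q with Prod.map f g q = (c, d), pr p (fun ω => (A ω, B ω)) q :=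
        pr_comp (fun ω => (A ω, B ω)) (Prod.map f g) (c, d)
    _ = ∑ a with f a = c, ∑ b with g b = d, pr p (fun ω => (A ω, B ω)) (a, b) := by
      rw [← sum_product']
      congr 1
      ext
      simp [Prod.ext_iff]
    _ = pr p (fun ω => f (A ω)) c * pr p (fun ω => g (B ω)) d := by
      simp only [h _ _, pr_comp, sum_mul_sum]

lemma Markov.exists_fst_eq (hp : IsPMF p) {A : Ω → α} {B : Ω → β} {C : Ω → γ}
    (hM : Markov p A B C)
    (hA : ∀ a b, pr p B b ≠ 0 → pr p (fun ω => (A ω, B ω)) (a, b) ≠ 0) :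
    ∀ ω, p ω ≠ 0 → ∀ a,
      ∃ ω', p ω' ≠ 0 ∧ A ω' = a ∧ B ω' = B ω ∧ C ω' = C ω := by
  intro ω hω a
  have hABC : pr p (fun ω => (A ω, B ω, C ω)) (a, B ω, C ω) ≠ 0 := by
    intro h0
    have := hM a (B ω) (C ω)
    rw [h0, zero_mul] at this
    exact mul_ne_zero (hA a _ (pr_apply_ne_zero hp B hω))
      (pr_apply_ne_zero hp (fun ω => (B ω, C ω)) hω) this.symm
  obtain ⟨ω', hω', he⟩ := exists_of_pr_ne_zero hABC
  simp only [Prod.mk.injEq] at he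
  exact ⟨ω', hω', he.1, he.2.1, he.2.2⟩

lemma ent_eq_sum_negMulLog [Fintype α] (F : Ω → α) :
    ent p F = (∑ a, negMulLog (pr p F a)) / log 2 := by
  simp only [ent, negMulLog, logb, sum_div, ← sum_neg_distrib]
  congr 1
  ext
  ring

lemma ent_pair_eq_add_of_indepRV (hp : IsPMF p) [Fintype α] [Fintype β] {A : Ω → α}
    {B : Ω → β} (h : IndepRV p A B) :
    ent p (fun ω => (A ω, B ω)) = ent p A + ent p B := by
  simp only [ent_eq_sum_negMulLog, Fintype.sum_prod_type, h _ _, negMulLog_mul,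
    sum_add_distrib, ← sum_mul, ← mul_sum, sum_pr hp]
  ring

lemma apply_sum_eq_sum_apply {ι : Type*} {s : Finset ι} {g : ι → ℝ} {φ : ℝ → ℝ}
    (hφ : φ 0 = 0)
    (hg : ∀ i ∈ s, ∀ j ∈ s, g i ≠ 0 → g j ≠ 0 → i = j) :
    φ (∑ i ∈ s, g i) = ∑ i ∈ s, φ (g i) := by
  by_cases h : ∃ i ∈ s, g i ≠ 0
  · obtain ⟨i, hi, hgi⟩ := h
    have hzero : ∀ j ∈ s, j ≠ i → g j = 0 := fun j hj hji =>
      by_contra fun hgj => hji (hg j hj i hi hgj hgi)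
    rw [sum_eq_single_of_mem i hi hzero,
      sum_eq_single_of_mem i hi fun j hj hji => by rw [hzero j hj hji, hφ]]
  · push Not at h
    rw [sum_eq_zero h, hφ, sum_eq_zero fun i hi => by rw [h i hi, hφ]]

lemma ent_comp_of_determinedBy [Fintype α] [Fintype β] (T : Ω → α)
    (f : α → β) (h : DeterminedBy p T (fun ω => f (T ω))) :
    ent p (fun ω => f (T ω)) = ent p T := by
  simp only [ent_eq_sum_negMulLog, pr_comp]
  rw [← sum_fiberwise univ f (fun a => negMulLog (pr p T a))]
  congr 1
  refine sum_congr rfl fun b _ => apply_sum_eq_sum_apply negMulLog_zero ?_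
  intro a ha a' ha' hne hne'
  obtain ⟨ω, hω, rfl⟩ := exists_of_pr_ne_zero hne
  obtain ⟨ω', hω', rfl⟩ := exists_of_pr_ne_zero hne'
  simp only [mem_filter, mem_univ, true_and] at ha ha'
  exact h ω ω' hω hω' (ha.trans ha'.symm)

lemma condEnt_eq_sum (hp : IsPMF p) [Fintype α] [Fintype γ] (X : Ω → α) (Z : Ω → γ) :
    condEnt p X Z = ∑ z, ∑ x, pr p (fun ω => (X ω, Z ω)) (x, z) *
      logb 2 (pr p Z z / pr p (fun ω => (X ω, Z ω)) (x, z)) := by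
  have hZ : ∑ z, pr p Z z * logb 2 (pr p Z z)
      = ∑ z, ∑ x, pr p (fun ω => (X ω, Z ω)) (x, z) * logb 2 (pr p Z z) := by
    simp only [← sum_mul, sum_pr_pair]
  rw [condEnt, ent, ent, Fintype.sum_prod_type, sum_comm, hZ, neg_sub_neg, ← sum_sub_distrib]
  refine sum_congr rfl fun z _ => ?_
  rw [← sum_sub_distrib]
  refine sum_congr rfl fun x _ => ?_
  by_cases hxz : pr p (fun ω => (X ω, Z ω)) (x, z) = 0
  · simp [hxz]
  have hz : pr p Z z ≠ 0 :=
    ((lt_of_le_of_ne (pr_nonneg hp _ _) (Ne.symm hxz)).trans_le (pr_pair_le hp X Z x z)).ne'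
  rw [logb_div hz hxz]
  ring

lemma mul_logb_div_nonneg {a m : ℝ} (ha : 0 ≤ a) (ham : a ≤ m) :
    0 ≤ a * logb 2 (m / a) := by
  rcases ha.eq_or_lt with rfl | ha
  · simp
  exact mul_nonneg ha.le (logb_nonneg one_lt_two ((one_le_div ha).2 ham))

lemma mul_logb_div_pos {a m : ℝ} (ha : 0 < a) (ham : a < m) : 0 < a * logb 2 (m / a) :=
  mul_pos ha (logb_pos one_lt_two ((one_lt_div ha).2 ham))

lemma determinedBy_of_condEnt_eq_zero (hp : IsPMF p) [Fintype α] [Fintype γ] {X : Ω → α}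
    {Z : Ω → γ} (h : condEnt p X Z = 0) : DeterminedBy p X Z := by
  intro ω ω' hω hω' hZ
  by_contra hne
  set J := pr p (fun ω => (X ω, Z ω))
  have hterm : ∀ z x, 0 ≤ J (x, z) * logb 2 (pr p Z z / J (x, z)) := fun z x =>
    mul_logb_div_nonneg (pr_nonneg hp _ _) (pr_pair_le hp X Z x z)
  have h₁ : 0 < J (X ω, Z ω) := (pr_nonneg hp _ _).lt_of_ne (pr_apply_ne_zero hp _ hω).symm
  have h₂ : 0 < J (X ω', Z ω) := by
    rw [hZ]
    exact (pr_nonneg hp _ _).lt_of_ne (pr_apply_ne_zero hp (fun ω => (X ω, Z ω)) hω').symm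
  have hlt : J (X ω, Z ω) < pr p Z (Z ω) := by
    have hpair : J (X ω, Z ω) + J (X ω', Z ω) ≤ pr p Z (Z ω) := by
      rw [← sum_pair (f := fun x => J (x, Z ω)) hne, ← sum_pr_pair X Z]
      exact sum_le_sum_of_subset_of_nonneg (subset_univ _) fun x _ _ => pr_nonneg hp _ _
    linarith
  refine h.not_gt ?_
  rw [condEnt_eq_sum hp]
  exact sum_pos' (fun z _ => sum_nonneg fun x _ => hterm z x)
    ⟨Z ω, mem_univ _,
      sum_pos' (fun x _ => hterm _ x) ⟨X ω, mem_univ _, mul_logb_div_pos h₁ hlt⟩⟩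

lemma mul_logb_div_add_mul_logb_div (a b : ℝ) :
    a * logb 2 ((a + b) / a) + b * logb 2 ((a + b) / b)
      = (a + b) * binEntropy (a / (a + b)) / log 2 := by
  rcases eq_or_ne (a + b) 0 with h | h
  · simp [h]
  have hb : 1 - a / (a + b) = b / (a + b) := by field_simp; ring
  simp only [binEntropy, hb, inv_div, logb]
  field_simp

lemma mul_logb_div_add_mul_logb_div_le {a b : ℝ} (ha : 0 ≤ a) (hb : 0 ≤ b) :
    a * logb 2 ((a + b) / a) + b * logb 2 ((a + b) / b) ≤ a + b := by
  rw [mul_logb_div_add_mul_logb_div, div_le_iff₀ (log_pos one_lt_two)]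
  exact mul_le_mul_of_nonneg_left binEntropy_le_log_two (add_nonneg ha hb)

lemma eq_of_mul_logb_div_add_mul_logb_div_eq {a b : ℝ} (ha : 0 ≤ a) (hb : 0 ≤ b)
    (h : a * logb 2 ((a + b) / a) + b * logb 2 ((a + b) / b) = a + b) : a = b := by
  rcases (add_nonneg ha hb).eq_or_lt with hab | hab
  · linarith
  rw [mul_logb_div_add_mul_logb_div, div_eq_iff (log_pos one_lt_two).ne',
    mul_right_inj' hab.ne', binEntropy_eq_log_two] at h
  field_simp at h
  linarith

lemma pr_eq_half_of_condEnt_eq_one (hp : IsPMF p) [Fintype γ] {X : Ω → Bool} {Z : Ω → γ}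
    (h : condEnt p X Z = 1) (b : Bool) (z : γ) :
    pr p (fun ω => (X ω, Z ω)) (b, z) = pr p Z z / 2 := by
  set J := pr p (fun ω => (X ω, Z ω))
  have hZ : ∀ z, pr p Z z = J (true, z) + J (false, z) := fun z => by
    rw [← sum_pr_pair X Z z, Fintype.sum_bool]
  have hle : ∀ z, ∑ x, J (x, z) * logb 2 (pr p Z z / J (x, z)) ≤ pr p Z z := fun z => by
    rw [Fintype.sum_bool, hZ z]
    exact mul_logb_div_add_mul_logb_div_le (pr_nonneg hp _ _) (pr_nonneg hp _ _)
  have hsum : ∑ z, ∑ x, J (x, z) * logb 2 (pr p Z z / J (x, z)) = ∑ z, pr p Z z := by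
    rw [← condEnt_eq_sum hp, h, sum_pr hp]
  have hz := (sum_eq_sum_iff_of_le fun z _ => hle z).1 hsum z (mem_univ z)
  rw [Fintype.sum_bool, hZ z] at hz
  have := eq_of_mul_logb_div_add_mul_logb_div_eq (pr_nonneg hp _ _) (pr_nonneg hp _ _) hz
  cases b <;> linarith [hZ z]

end Fintype

lemma determinedBy_xor_of_split {V : Ω → γ} {X X₁ N : Ω → Bool}
    (hsplit : ∀ ω, p ω ≠ 0 → ∀ b,
      ∃ ω', p ω' ≠ 0 ∧ X₁ ω' = b ∧ V ω' = V ω ∧ (X ω', N ω') = (X ω, N ω))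
    (hX₁ : DeterminedBy p X₁ (fun ω => (V ω, X ω ^^ X₁ ω, X ω ^^ N ω))) :
    DeterminedBy p (fun ω => (N ω, X ω, V ω)) (fun ω => (X ω ^^ N ω, V ω)) := by
  intro ω ω' hω hω' h
  simp only [Prod.mk.injEq] at h ⊢
  -- resampling `X₁ := X` makes `X ⊕ X₁ = false` at both outcomes
  obtain ⟨ω₁, hω₁, hb₁, hV₁, hXN₁⟩ := hsplit ω hω (X ω)
  obtain ⟨ω₂, hω₂, hb₂, hV₂, hXN₂⟩ := hsplit ω' hω' (X ω')
  simp only [Prod.mk.injEq] at hXN₁ hXN₂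
  have hX : X ω = X ω' := by
    rw [← hb₁, ← hb₂]
    apply hX₁ ω₁ ω₂ hω₁ hω₂
    simp [hb₁, hb₂, hV₁, hV₂, hXN₁, hXN₂, h]
  rw [hX, Bool.xor_right_inj] at h
  exact ⟨h.1, hX, h.2⟩

end ISAC

open ISAC in
theorem stmt_10_general {Ω 𝒰 𝒜 : Type*} [Fintype Ω] [Fintype 𝒰] [Fintype 𝒜]
    (p : Ω → ℝ) (hp : IsPMF p)
    (X X₁ N S : Ω → Bool) (U : Ω → 𝒰) (A : Ω → 𝒜)
    (hMarkov : Markov p X₁ (fun ω => (U ω, A ω)) (fun ω => (X ω, N ω)))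
    (hIndep : IndepRV p (fun ω => (S ω, N ω)) (fun ω => (U ω, A ω, X ω, X₁ ω)))
    (h1 : condEnt p X₁ (fun ω => (U ω, A ω)) = 1)
    (h2 : condEnt p X₁
        (fun ω => (U ω, A ω, Bool.xor (X ω) (X₁ ω), Bool.xor (X ω) (N ω))) = 0) :
    condEnt p X (fun ω => (U ω, A ω)) + ent p N
      = condEnt p (fun ω => Bool.xor (X ω) (N ω)) (fun ω => (U ω, A ω)) := by
  have hX₁ : DeterminedBy p X₁ (fun ω => ((U ω, A ω), X ω ^^ X₁ ω, X ω ^^ N ω)) :=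
    (determinedBy_of_condEnt_eq_zero hp h2).of_comp fun q => (q.1.1, q.1.2, q.2)
  have hfull : ∀ b v, pr p (fun ω => (U ω, A ω)) v ≠ 0 →
      pr p (fun ω => (X₁ ω, (U ω, A ω))) (b, v) ≠ 0 := fun b v hv => by
    rw [pr_eq_half_of_condEnt_eq_one hp h1]
    exact div_ne_zero hv two_ne_zero
  have hNX := determinedBy_xor_of_split (hMarkov.exists_fst_eq hp hfull) hX₁
  have hind : IndepRV p N (fun ω => (X ω, (U ω, A ω))) :=
    hIndep.comp Prod.snd (fun q => (q.2.2.1, q.1, q.2.1))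
  have hent : ent p (fun ω => (X ω ^^ N ω, (U ω, A ω)))
      = ent p N + ent p (fun ω => (X ω, (U ω, A ω))) := by
    rw [← ent_pair_eq_add_of_indepRV hp hind]
    exact ent_comp_of_determinedBy (fun ω => (N ω, (X ω, (U ω, A ω))))
      (fun q => (q.2.1 ^^ q.1, q.2.2)) hNX
  unfold condEnt
  linarith

open ISAC in
/-- For binary `X, X₁, N, S` with `Y = (X ⊕ X₁, X ⊕ N)`, Markov chain `X₁ − (U,A) − (X,N)`,
`(S,N)` independent of `(U,A,X,X₁)`, and `H(S) = 1`: if `H(X₁|UA) = 1` and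
`H(X₁ | UA, X⊕X₁, X⊕N) = 0`, then `H(X|UA) + H(N) = H(X⊕N | UA)`. -/
theorem stmt_10 {Ω 𝒰 𝒜 : Type*} [Fintype Ω] [Fintype 𝒰] [Fintype 𝒜]
    (p : Ω → ℝ) (hp : IsPMF p)
    (X X₁ N S : Ω → Bool) (U : Ω → 𝒰) (A : Ω → 𝒜)
    (Y₁ : Ω → Bool) (hY₁ : ∀ ω, Y₁ ω = Bool.xor (X₁ ω) (S ω))
    (Y : Ω → Bool × Bool)
    (hY : ∀ ω, Y ω = (Bool.xor (X ω) (X₁ ω), Bool.xor (X ω) (N ω)))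
    (hS : ent p S = 1)
    (hMarkov : Markov p X₁ (fun ω => (U ω, A ω)) (fun ω => (X ω, N ω)))
    (hIndep : IndepRV p (fun ω => (S ω, N ω)) (fun ω => (U ω, A ω, X ω, X₁ ω)))
    (h1 : condEnt p X₁ (fun ω => (U ω, A ω)) = 1)
    (h2 : condEnt p X₁
        (fun ω => (U ω, A ω, Bool.xor (X ω) (X₁ ω), Bool.xor (X ω) (N ω))) = 0) :
    condEnt p X (fun ω => (U ω, A ω)) + ent p N
      = condEnt p (fun ω => Bool.xor (X ω) (N ω)) (fun ω => (U ω, A ω)) :=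
  stmt_10_general p hp X X₁ N S U A hMarkov hIndep h1 h2
end

section
/- Let W be uniform on a finite set, Y^n, Y₁^n sequences of finite random variables, X_i a function of W, X_{1,i} a function of Y₁^{i−1}, with the memoryless property that (W, Y₁^{i−1}) − (X_i, X_{1,i}) − Y_{1,i} is a Markov chain for each i. Define T_i = (W, Y_{i+1}^n, Y₁^{i−1}), and assume in addition that T_i − (X_i, X_{1,i}, Y_{1,i}) − Y_i is a Markov chain for each i. Then Σ_{i=1}^n I(W, Y_{i+1}^n; Y_i) = Σ_{i=1}^n I(X_i, X_{1,i}; Y_i) − Σ_{i=1}^n I(T_i; Y_{1,i} | X_i, X_{1,i}, Y_i); consequently Σ_i I(X_{1,i}; Y_i | X_i) ≥ Σ_i I(T_i; Y_{1,i} | X_i, X_{1,i}, Y_i). -/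
open Finset
open scoped Classical

open ISAC

set_option maxHeartbeats 1000000

section Lib
variable {Ω : Type*} [Fintype Ω] {α β γ δ : Type*} {p : Ω → ℝ}

lemma pr_nonneg (h0 : ∀ ω, 0 ≤ p ω) (X : Ω → α) (x : α) : 0 ≤ pr p X x := by
  apply Finset.sum_nonneg; intro ω _; split <;> simp [h0 ω]

lemma pr_comp_sum [Fintype α] (X : Ω → α) (g : α → β) (b : β) :
    pr p (fun ω => g (X ω)) b = ∑ a, if g a = b then pr p X a else 0 := by
  unfold pr
  have h : ∀ ω, (if g (X ω) = b then p ω else 0)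
      = ∑ a, if X ω = a then (if g a = b then p ω else 0) else 0 := by
    intro ω; simp
  simp_rw [h]
  rw [Finset.sum_comm]
  apply Finset.sum_congr rfl; intro a _
  by_cases hg : g a = b <;> simp [hg]

lemma pr_comp (X : Ω → α) {g : α → β} (hg : Function.Injective g) (a : α) :
    pr p (fun ω => g (X ω)) (g a) = pr p X a := by
  unfold pr
  apply Finset.sum_congr rfl; intro ω _
  simp [hg.eq_iff]

lemma pr_comp_zero (X : Ω → α) (g : α → β) (b : β) (hb : ∀ a, g a ≠ b) :
    pr p (fun ω => g (X ω)) b = 0 := by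
  unfold pr
  apply Finset.sum_eq_zero; intro ω _
  simp [hb (X ω)]

lemma ent_comp [Fintype α] [Fintype β] (X : Ω → α) {g : α → β} (hg : Function.Injective g) :
    ent p (fun ω => g (X ω)) = ent p X := by
  unfold ent
  congr 1
  have h1 : (∑ b : β, pr p (fun ω => g (X ω)) b * Real.logb 2 (pr p (fun ω => g (X ω)) b))
      = ∑ b ∈ Finset.univ.image g, pr p (fun ω => g (X ω)) b * Real.logb 2 (pr p (fun ω => g (X ω)) b) := by
    symm
    apply Finset.sum_subset (Finset.subset_univ _)
    intro b _ hb
    have hz : ∀ a, g a ≠ b := fun a h => hb (Finset.mem_image.2 ⟨a, Finset.mem_univ a, h⟩)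
    rw [pr_comp_zero X g b hz]; simp
  rw [h1, Finset.sum_image (fun a _ a' _ h => hg h)]
  apply Finset.sum_congr rfl; intro a _
  rw [pr_comp X hg]

lemma ent_congr [Fintype α] [Fintype β] {X : Ω → α} {X' : Ω → β} (g : α → β)
    (hg : Function.Injective g) (h : ∀ ω, X' ω = g (X ω)) : ent p X' = ent p X := by
  have : X' = fun ω => g (X ω) := funext h
  rw [this, ent_comp X hg]

lemma sum_pr [Fintype α] (hp : ∑ ω, p ω = 1) (X : Ω → α) : ∑ a, pr p X a = 1 := by
  unfold pr
  rw [Finset.sum_comm]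
  rw [← hp]
  apply Finset.sum_congr rfl; intro ω _
  simp

lemma pr_marg [Fintype α] (U : Ω → α) (V : Ω → β) (v : β) :
    ∑ a, pr p (fun ω => (U ω, V ω)) (a, v) = pr p V v := by
  unfold pr
  rw [Finset.sum_comm]
  apply Finset.sum_congr rfl; intro ω _
  by_cases hv : V ω = v <;> simp [hv, Prod.ext_iff]

lemma pr_mono (h0 : ∀ ω, 0 ≤ p ω) {X : Ω → α} {X' : Ω → β} {x : α} {x' : β}
    (h : ∀ ω, X ω = x → X' ω = x') : pr p X x ≤ pr p X' x' := by
  apply Finset.sum_le_sum; intro ω _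
  by_cases hx : X ω = x
  · simp [hx, h ω hx, le_refl]
  · simp only [hx, if_false]; split <;> simp [h0 ω]

lemma ent_comp_expand [Fintype α] [Fintype β] (X : Ω → α) (g : α → β) :
    ent p (fun ω => g (X ω))
      = -∑ a, pr p X a * Real.logb 2 (pr p (fun ω => g (X ω)) (g a)) := by
  unfold ent
  congr 1
  rw [Finset.sum_congr rfl (fun b _ => by
    rw [pr_comp_sum X g b, Finset.sum_mul])]
  rw [Finset.sum_comm]
  apply Finset.sum_congr rfl; intro a _
  rw [Finset.sum_eq_single (g a)]
  · rw [← pr_comp_sum X g (g a)]; simp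
  · intro b _ hb; simp [Ne.symm hb]
  · simp

end Lib

section
variable {Ω : Type*} [Fintype Ω] {α β γ : Type*} [Fintype α] [Fintype β] [Fintype γ] {p : Ω → ℝ}

lemma cmi_eq_sum (A : Ω → α) (B : Ω → β) (Z : Ω → γ) :
    cmi p A B Z = ∑ x : α × β × γ,
      pr p (fun ω => (A ω, B ω, Z ω)) x *
        (Real.logb 2 (pr p (fun ω => (A ω, B ω, Z ω)) x)
          + Real.logb 2 (pr p Z x.2.2)
          - Real.logb 2 (pr p (fun ω => (A ω, Z ω)) (x.1, x.2.2))
          - Real.logb 2 (pr p (fun ω => (B ω, Z ω)) (x.2.1, x.2.2))) := by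
  have h1 := ent_comp_expand (p := p) (fun ω => (A ω, B ω, Z ω)) (fun x => (x.1, x.2.2))
  have h2 := ent_comp_expand (p := p) (fun ω => (A ω, B ω, Z ω)) (fun x => (x.2.1, x.2.2))
  have h3 := ent_comp_expand (p := p) (fun ω => (A ω, B ω, Z ω)) (fun x => x)
  have h4 := ent_comp_expand (p := p) (fun ω => (A ω, B ω, Z ω)) (fun x => x.2.2)
  dsimp only at h1 h2 h3 h4
  unfold cmi
  rw [h1, h2, h3, h4]
  rw [Finset.sum_congr rfl (fun x _ => by ring :
    ∀ x ∈ Finset.univ, pr p (fun ω => (A ω, B ω, Z ω)) x *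
        (Real.logb 2 (pr p (fun ω => (A ω, B ω, Z ω)) x)
          + Real.logb 2 (pr p Z x.2.2)
          - Real.logb 2 (pr p (fun ω => (A ω, Z ω)) (x.1, x.2.2))
          - Real.logb 2 (pr p (fun ω => (B ω, Z ω)) (x.2.1, x.2.2)))
      = (pr p (fun ω => (A ω, B ω, Z ω)) x * Real.logb 2 (pr p (fun ω => (A ω, B ω, Z ω)) x)
          + pr p (fun ω => (A ω, B ω, Z ω)) x * Real.logb 2 (pr p Z x.2.2))
        - (pr p (fun ω => (A ω, B ω, Z ω)) x * Real.logb 2 (pr p (fun ω => (A ω, Z ω)) (x.1, x.2.2))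
          + pr p (fun ω => (A ω, B ω, Z ω)) x * Real.logb 2 (pr p (fun ω => (B ω, Z ω)) (x.2.1, x.2.2))))]
  rw [Finset.sum_sub_distrib, Finset.sum_add_distrib, Finset.sum_add_distrib]
  ring
end

section
variable {Ω : Type*} [Fintype Ω] {α β γ : Type*} [Fintype α] [Fintype β] [Fintype γ] {p : Ω → ℝ}

lemma logterm_ge {pj pz paz pbz : ℝ} (hpj : 0 < pj) (hpz : 0 < pz) (hpaz : 0 < paz) (hpbz : 0 < pbz) :
    (pj - paz * pbz / pz) / Real.log 2
      ≤ pj * (Real.logb 2 pj + Real.logb 2 pz - Real.logb 2 paz - Real.logb 2 pbz) := by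
  have hl2 : (0:ℝ) < Real.log 2 := Real.log_pos (by norm_num)
  have hq : (0:ℝ) < paz * pbz / pz := by positivity
  have hlog : Real.log (paz * pbz / pz / pj) ≤ paz * pbz / pz / pj - 1 :=
    Real.log_le_sub_one_of_pos (by positivity)
  have hexp : Real.log (paz * pbz / pz / pj)
      = Real.log paz + Real.log pbz - Real.log pz - Real.log pj := by
    rw [Real.log_div (ne_of_gt hq) (ne_of_gt hpj),
        Real.log_div (by positivity) (ne_of_gt hpz),
        Real.log_mul (ne_of_gt hpaz) (ne_of_gt hpbz)]
  rw [hexp] at hlog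
  have h2 : pj * (Real.log paz + Real.log pbz - Real.log pz - Real.log pj)
      ≤ paz * pbz / pz - pj := by
    have := mul_le_mul_of_nonneg_left hlog (le_of_lt hpj)
    calc pj * (Real.log paz + Real.log pbz - Real.log pz - Real.log pj)
        ≤ pj * (paz * pbz / pz / pj - 1) := this
      _ = paz * pbz / pz - pj := by field_simp; try ring
  simp only [Real.logb]
  rw [div_le_iff₀ hl2]
  have : pj * (Real.log pj / Real.log 2 + Real.log pz / Real.log 2 - Real.log paz / Real.log 2
      - Real.log pbz / Real.log 2) * Real.log 2
      = pj * (Real.log pj + Real.log pz - Real.log paz - Real.log pbz) := by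
    field_simp; try ring
  rw [this]
  nlinarith [h2]

end

section
variable {Ω : Type*} [Fintype Ω] {α β γ : Type*} [Fintype α] [Fintype β] [Fintype γ] {p : Ω → ℝ}

lemma sum_q_le_one (hp : IsPMF p) (A : Ω → α) (B : Ω → β) (Z : Ω → γ) :
    ∑ x : α × β × γ, (if 0 < pr p Z x.2.2 then
        pr p (fun ω => (A ω, Z ω)) (x.1, x.2.2) * pr p (fun ω => (B ω, Z ω)) (x.2.1, x.2.2)
          / pr p Z x.2.2 else 0) ≤ 1 := by
  have hz : ∀ z : γ, (∑ a : α, ∑ b : β, (if 0 < pr p Z z then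
      pr p (fun ω => (A ω, Z ω)) (a, z) * pr p (fun ω => (B ω, Z ω)) (b, z) / pr p Z z else 0))
      ≤ pr p Z z := by
    intro z
    by_cases h : 0 < pr p Z z
    · simp only [if_pos h]
      have hb : ∀ a : α, (∑ b : β,
          pr p (fun ω => (A ω, Z ω)) (a, z) * pr p (fun ω => (B ω, Z ω)) (b, z) / pr p Z z)
          = pr p (fun ω => (A ω, Z ω)) (a, z) := by
        intro a
        rw [← Finset.sum_div, ← Finset.mul_sum, pr_marg B Z z]
        field_simp
      rw [Finset.sum_congr rfl (fun a _ => hb a), pr_marg A Z z]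
    · simp only [if_neg h]
      simp only [Finset.sum_const_zero]
      exact pr_nonneg hp.1 Z z
  calc (∑ x : α × β × γ, (if 0 < pr p Z x.2.2 then
        pr p (fun ω => (A ω, Z ω)) (x.1, x.2.2) * pr p (fun ω => (B ω, Z ω)) (x.2.1, x.2.2)
          / pr p Z x.2.2 else 0))
      = ∑ z : γ, ∑ a : α, ∑ b : β, (if 0 < pr p Z z then
        pr p (fun ω => (A ω, Z ω)) (a, z) * pr p (fun ω => (B ω, Z ω)) (b, z)
          / pr p Z z else 0) := by
        rw [Fintype.sum_prod_type]
        rw [Finset.sum_congr rfl (fun a _ => Fintype.sum_prod_type _)]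
        rw [Finset.sum_congr rfl (fun (a : α) (_ : a ∈ Finset.univ) =>
          (Finset.sum_comm (s := Finset.univ) (t := Finset.univ)
            (f := fun (b : β) (z : γ) => (if 0 < pr p Z z then
        pr p (fun ω => (A ω, Z ω)) (a, z) * pr p (fun ω => (B ω, Z ω)) (b, z)
          / pr p Z z else 0))))]
        exact Finset.sum_comm
    _ ≤ ∑ z : γ, pr p Z z := Finset.sum_le_sum (fun z _ => hz z)
    _ = 1 := sum_pr hp.2 Z

lemma cmi_nonneg (hp : IsPMF p) (A : Ω → α) (B : Ω → β) (Z : Ω → γ) :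
    0 ≤ cmi p A B Z := by
  have hl2 : (0:ℝ) < Real.log 2 := Real.log_pos (by norm_num)
  rw [cmi_eq_sum A B Z]
  have key : ∀ x : α × β × γ,
      (pr p (fun ω => (A ω, B ω, Z ω)) x - (if 0 < pr p Z x.2.2 then
        pr p (fun ω => (A ω, Z ω)) (x.1, x.2.2) * pr p (fun ω => (B ω, Z ω)) (x.2.1, x.2.2)
          / pr p Z x.2.2 else 0)) / Real.log 2
      ≤ pr p (fun ω => (A ω, B ω, Z ω)) x *
        (Real.logb 2 (pr p (fun ω => (A ω, B ω, Z ω)) x)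
          + Real.logb 2 (pr p Z x.2.2)
          - Real.logb 2 (pr p (fun ω => (A ω, Z ω)) (x.1, x.2.2))
          - Real.logb 2 (pr p (fun ω => (B ω, Z ω)) (x.2.1, x.2.2))) := by
    intro x
    by_cases hpj : 0 < pr p (fun ω => (A ω, B ω, Z ω)) x
    · have hpz : 0 < pr p Z x.2.2 :=
        lt_of_lt_of_le hpj (pr_mono hp.1 (fun ω h => by rw [← h]))
      have hpaz : 0 < pr p (fun ω => (A ω, Z ω)) (x.1, x.2.2) :=
        lt_of_lt_of_le hpj (pr_mono hp.1 (fun ω h => by rw [← h]))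
      have hpbz : 0 < pr p (fun ω => (B ω, Z ω)) (x.2.1, x.2.2) :=
        lt_of_lt_of_le hpj (pr_mono hp.1 (fun ω h => by rw [← h]))
      rw [if_pos hpz]
      exact logterm_ge hpj hpz hpaz hpbz
    · have h0 : pr p (fun ω => (A ω, B ω, Z ω)) x = 0 :=
        le_antisymm (not_lt.1 hpj) (pr_nonneg hp.1 _ _)
      rw [h0, zero_mul]
      apply div_nonpos_of_nonpos_of_nonneg _ (le_of_lt hl2)
      simp only [zero_sub, neg_nonpos]
      split
      · next hpz => exact div_nonneg (mul_nonneg (pr_nonneg hp.1 _ _) (pr_nonneg hp.1 _ _)) (le_of_lt hpz)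
      · exact le_refl 0
  calc (0:ℝ) ≤ (1 - ∑ x : α × β × γ, (if 0 < pr p Z x.2.2 then
        pr p (fun ω => (A ω, Z ω)) (x.1, x.2.2) * pr p (fun ω => (B ω, Z ω)) (x.2.1, x.2.2)
          / pr p Z x.2.2 else 0)) / Real.log 2 := by
        apply div_nonneg _ (le_of_lt hl2)
        have := sum_q_le_one hp A B Z
        linarith
    _ = ∑ x : α × β × γ, (pr p (fun ω => (A ω, B ω, Z ω)) x - (if 0 < pr p Z x.2.2 then
        pr p (fun ω => (A ω, Z ω)) (x.1, x.2.2) * pr p (fun ω => (B ω, Z ω)) (x.2.1, x.2.2)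
          / pr p Z x.2.2 else 0)) / Real.log 2 := by
        rw [← Finset.sum_div, Finset.sum_sub_distrib, sum_pr hp.2]
    _ ≤ _ := Finset.sum_le_sum (fun x _ => key x)

end

section
variable {Ω : Type*} [Fintype Ω] {α β γ : Type*} [Fintype α] [Fintype β] [Fintype γ] {p : Ω → ℝ}

lemma cmi_zero_of_markov (hp : IsPMF p) {A : Ω → α} {B : Ω → β} {C : Ω → γ}
    (h : Markov p A B C) : cmi p A C B = 0 := by
  rw [cmi_eq_sum A C B]
  apply Finset.sum_eq_zero
  rintro ⟨a, c, b⟩ -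
  by_cases hpj : 0 < pr p (fun ω => (A ω, C ω, B ω)) (a, c, b)
  case neg =>
    rw [le_antisymm (not_lt.1 hpj) (pr_nonneg hp.1 _ _), zero_mul]
  case pos =>
    have hJ : pr p (fun ω => (A ω, C ω, B ω)) (a, c, b)
        = pr p (fun ω => (A ω, B ω, C ω)) (a, b, c) :=
      pr_comp (p := p) (fun ω => (A ω, B ω, C ω))
        (g := fun x => (x.1, x.2.2, x.2.1))
        (by rintro ⟨u, v, w⟩ ⟨u', v', w'⟩ hx; simp [Prod.ext_iff] at hx ⊢; tauto) (a, b, c)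
    have hCB : pr p (fun ω => (C ω, B ω)) (c, b) = pr p (fun ω => (B ω, C ω)) (b, c) :=
      pr_comp (p := p) (fun ω => (B ω, C ω)) (g := fun x => (x.2, x.1))
        (by rintro ⟨u, v⟩ ⟨u', v'⟩ hx; simp [Prod.ext_iff] at hx ⊢; tauto) (b, c)
    have hB : 0 < pr p B b := lt_of_lt_of_le hpj (pr_mono hp.1 (fun ω hω => by
      have : A ω = a ∧ C ω = c ∧ B ω = b := by simpa [Prod.ext_iff] using hω
      exact this.2.2))
    have hAB : 0 < pr p (fun ω => (A ω, B ω)) (a, b) := lt_of_lt_of_le hpj (pr_mono hp.1 (fun ω hω => by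
      have : A ω = a ∧ C ω = c ∧ B ω = b := by simpa [Prod.ext_iff] using hω
      simp [this.1, this.2.2]))
    have hCB' : 0 < pr p (fun ω => (C ω, B ω)) (c, b) := lt_of_lt_of_le hpj (pr_mono hp.1 (fun ω hω => by
      have : A ω = a ∧ C ω = c ∧ B ω = b := by simpa [Prod.ext_iff] using hω
      simp [this.2.1, this.2.2]))
    have key : pr p (fun ω => (A ω, C ω, B ω)) (a, c, b) * pr p B b
        = pr p (fun ω => (A ω, B ω)) (a, b) * pr p (fun ω => (C ω, B ω)) (c, b) := by
      rw [hJ, hCB]; exact h a b c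
    have hbr : Real.logb 2 (pr p (fun ω => (A ω, C ω, B ω)) (a, c, b))
          + Real.logb 2 (pr p B b)
          - Real.logb 2 (pr p (fun ω => (A ω, B ω)) (a, b))
          - Real.logb 2 (pr p (fun ω => (C ω, B ω)) (c, b)) = 0 := by
      rw [← Real.logb_mul (ne_of_gt hpj) (ne_of_gt hB), sub_sub,
          ← Real.logb_mul (ne_of_gt hAB) (ne_of_gt hCB'), key, sub_self]
    rw [hbr, mul_zero]

end

section
variable {Ω : Type*} [Fintype Ω] {α α' β β' γ γ' δ : Type*} [Fintype α] [Fintype α'] [Fintype β] [Fintype β'] [Fintype γ] [Fintype γ'] [Fintype δ] {p : Ω → ℝ}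

lemma cmi_congr_left {A : Ω → α} {A' : Ω → α'} {B : Ω → β} {Z : Ω → γ}
    (g : α → α') (hg : Function.Injective g) (h : ∀ ω, A' ω = g (A ω)) :
    cmi p A' B Z = cmi p A B Z := by
  unfold cmi
  rw [ent_congr (X := fun ω => (A ω, Z ω)) (fun x : α × γ => (g x.1, x.2))
      (fun x y hxy => by simp [Prod.ext_iff, hg.eq_iff] at hxy ⊢; tauto)
      (fun ω => by simp [h ω]),
    ent_congr (X := fun ω => (A ω, B ω, Z ω)) (fun x : α × β × γ => (g x.1, x.2))
      (fun x y hxy => by simp [Prod.ext_iff, hg.eq_iff] at hxy ⊢; tauto)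
      (fun ω => by simp [h ω])]

lemma cmi_congr_mid {A : Ω → α} {B : Ω → β} {B' : Ω → β'} {Z : Ω → γ}
    (g : β → β') (hg : Function.Injective g) (h : ∀ ω, B' ω = g (B ω)) :
    cmi p A B' Z = cmi p A B Z := by
  unfold cmi
  rw [ent_congr (X := fun ω => (B ω, Z ω)) (fun x : β × γ => (g x.1, x.2))
      (fun x y hxy => by simp [Prod.ext_iff, hg.eq_iff] at hxy ⊢; tauto)
      (fun ω => by simp [h ω]),
    ent_congr (X := fun ω => (A ω, B ω, Z ω)) (fun x : α × β × γ => (x.1, g x.2.1, x.2.2))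
      (fun x y hxy => by simp [Prod.ext_iff, hg.eq_iff] at hxy ⊢; tauto)
      (fun ω => by simp [h ω])]

lemma cmi_congr_right {A : Ω → α} {B : Ω → β} {Z : Ω → γ} {Z' : Ω → γ'}
    (g : γ → γ') (hg : Function.Injective g) (h : ∀ ω, Z' ω = g (Z ω)) :
    cmi p A B Z' = cmi p A B Z := by
  unfold cmi
  rw [ent_congr (X := fun ω => (A ω, Z ω)) (fun x : α × γ => (x.1, g x.2))
      (fun x y hxy => by simp [Prod.ext_iff, hg.eq_iff] at hxy ⊢; tauto)
      (fun ω => by simp [h ω]),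
    ent_congr (X := fun ω => (B ω, Z ω)) (fun x : β × γ => (x.1, g x.2))
      (fun x y hxy => by simp [Prod.ext_iff, hg.eq_iff] at hxy ⊢; tauto)
      (fun ω => by simp [h ω]),
    ent_congr (X := fun ω => (A ω, B ω, Z ω)) (fun x : α × β × γ => (x.1, x.2.1, g x.2.2))
      (fun x y hxy => by simp [Prod.ext_iff, hg.eq_iff] at hxy ⊢; tauto)
      (fun ω => by simp [h ω]),
    ent_congr g hg h]

lemma cmi_symm (A : Ω → α) (B : Ω → β) (Z : Ω → γ) :
    cmi p A B Z = cmi p B A Z := by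
  unfold cmi
  rw [ent_congr (X := fun ω => (B ω, A ω, Z ω)) (fun x : β × α × γ => (x.2.1, x.1, x.2.2))
      (fun x y hxy => by simp [Prod.ext_iff] at hxy ⊢; tauto)
      (fun ω => rfl)]
  ring

lemma mi_congr_left {A : Ω → α} {A' : Ω → α'} {V : Ω → β}
    (g : α → α') (hg : Function.Injective g) (h : ∀ ω, A' ω = g (A ω)) :
    mi p A' V = mi p A V := by
  unfold mi
  rw [ent_congr g hg h,
    ent_congr (X := fun ω => (A ω, V ω)) (fun x : α × β => (g x.1, x.2))
      (fun x y hxy => by simp [Prod.ext_iff, hg.eq_iff] at hxy ⊢; tauto)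
      (fun ω => by simp [h ω])]

lemma mi_chain (A : Ω → α) (B : Ω → β) (V : Ω → γ) :
    mi p (fun ω => (A ω, B ω)) V = mi p A V + cmi p B V A := by
  unfold mi cmi
  rw [ent_congr (X := fun ω => (B ω, A ω)) (fun x : β × α => (x.2, x.1))
      (fun x y hxy => by simp [Prod.ext_iff] at hxy ⊢; tauto) (fun ω => rfl),
    ent_congr (X := fun ω => (V ω, A ω)) (fun x : γ × α => (x.2, x.1))
      (fun x y hxy => by simp [Prod.ext_iff] at hxy ⊢; tauto) (fun ω => rfl),
    ent_congr (X := fun ω => (B ω, V ω, A ω)) (fun x : β × γ × α => ((x.2.2, x.1), x.2.1))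
      (fun x y hxy => by simp [Prod.ext_iff] at hxy ⊢; tauto) (fun ω => rfl)]
  ring

lemma cmi_chain (A : Ω → α) (B : Ω → β) (V : Ω → δ) (Z : Ω → γ) :
    cmi p (fun ω => (A ω, B ω)) V Z
      = cmi p A V Z + cmi p B V (fun ω => (Z ω, A ω)) := by
  unfold cmi
  rw [ent_congr (X := fun ω => (B ω, Z ω, A ω)) (fun x : β × γ × α => ((x.2.2, x.1), x.2.1))
      (fun x y hxy => by simp [Prod.ext_iff] at hxy ⊢; tauto) (fun ω => rfl),
    ent_congr (X := fun ω => (V ω, Z ω, A ω)) (fun x : δ × γ × α => (x.2.2, x.1, x.2.1))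
      (fun x y hxy => by simp [Prod.ext_iff] at hxy ⊢; tauto) (fun ω => rfl),
    ent_congr (X := fun ω => (B ω, V ω, Z ω, A ω))
      (fun x : β × δ × γ × α => ((x.2.2.2, x.1), x.2.1, x.2.2.1))
      (fun x y hxy => by simp [Prod.ext_iff] at hxy ⊢; tauto) (fun ω => rfl),
    ent_congr (X := fun ω => (Z ω, A ω)) (fun x : γ × α => (x.2, x.1))
      (fun x y hxy => by simp [Prod.ext_iff] at hxy ⊢; tauto) (fun ω => rfl)]
  ring

lemma cmi_zero_of_fn {A : Ω → α} {B : Ω → β} {Z : Ω → γ}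
    (k : γ → α) (h : ∀ ω, A ω = k (Z ω)) : cmi p A B Z = 0 := by
  unfold cmi
  rw [ent_congr (X := Z) (X' := fun ω => (A ω, Z ω)) (fun z : γ => (k z, z))
      (fun x y hxy => by simp [Prod.ext_iff] at hxy ⊢; tauto)
      (fun ω => by simp [h ω]),
    ent_congr (X := fun ω => (B ω, Z ω)) (X' := fun ω => (A ω, B ω, Z ω)) (fun x : β × γ => (k x.2, x.1, x.2))
      (fun x y hxy => by simp [Prod.ext_iff] at hxy ⊢; tauto)
      (fun ω => by simp [h ω])]
  ring

lemma cmi_drop_right {A : Ω → α} {B : Ω → β} {Z : Ω → γ} {U : Ω → δ}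
    (k : γ → δ) (h : ∀ ω, U ω = k (Z ω)) :
    cmi p A B (fun ω => (Z ω, U ω)) = cmi p A B Z :=
  cmi_congr_right (fun z => (z, k z))
    (fun x y hxy => by simp [Prod.ext_iff] at hxy ⊢; tauto)
    (fun ω => by simp [h ω])

lemma cmi_drop_left {A : Ω → α} {B : Ω → β} {Z : Ω → γ} {U : Ω → δ}
    (k : γ → δ) (h : ∀ ω, U ω = k (Z ω)) :
    cmi p A B (fun ω => (U ω, Z ω)) = cmi p A B Z :=
  cmi_congr_right (fun z => (k z, z))
    (fun x y hxy => by simp [Prod.ext_iff] at hxy ⊢; tauto)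
    (fun ω => by simp [h ω])

lemma cmi_chain2 (A : Ω → α) (B₁ : Ω → β) (B₂ : Ω → δ) (Z : Ω → γ) :
    cmi p A (fun ω => (B₁ ω, B₂ ω)) Z
      = cmi p A B₁ Z + cmi p A B₂ (fun ω => (B₁ ω, Z ω)) := by
  rw [cmi_symm A (fun ω => (B₁ ω, B₂ ω)) Z, cmi_chain B₁ B₂ A Z,
    cmi_symm B₁ A Z, cmi_symm B₂ A (fun ω => (Z ω, B₁ ω))]
  rw [cmi_congr_right (A := A) (B := B₂) (Z := fun ω => (B₁ ω, Z ω))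
    (Z' := fun ω => (Z ω, B₁ ω)) (fun x : β × γ => (x.2, x.1))
    (fun x y hxy => by simp [Prod.ext_iff] at hxy ⊢; tauto)
    (fun ω => rfl)]

end


section Tele
variable {Ω : Type*} [Fintype Ω] {𝒴 𝒴₁ : Type*} [Fintype 𝒴] [Fintype 𝒴₁] {n : ℕ} {p : Ω → ℝ}

def pastN (Y₁ : Fin n → Ω → 𝒴₁) (k : ℕ) (hk : k ≤ n) : Ω → (Fin k → 𝒴₁) :=
  fun ω j => Y₁ ⟨j.1, lt_of_lt_of_le j.2 hk⟩ ω

def futN (Y : Fin n → Ω → 𝒴) (k : ℕ) : Ω → (Fin (n - k) → 𝒴) :=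
  fun ω j => Y ⟨k + j.1, by omega⟩ ω

lemma past_expand (Y₁ : Fin n → Ω → 𝒴₁) {𝒱 ζ : Type*} [Fintype 𝒱] [Fintype ζ]
    (V : Ω → 𝒱) (Z : Ω → ζ) :
    ∀ (k : ℕ) (hk : k ≤ n), cmi p (pastN Y₁ k hk) V Z
      = ∑ j ∈ Finset.range k, (if h : j < n then
          cmi p (Y₁ ⟨j, h⟩) V (fun ω => (Z ω, pastN Y₁ j h.le ω)) else 0) := by
  intro k
  induction k with
  | zero =>
    intro hk
    rw [Finset.range_zero, Finset.sum_empty]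
    exact cmi_zero_of_fn (fun _ => fun j => j.elim0) (fun ω => funext fun j => j.elim0)
  | succ k ih =>
    intro hk
    have hk' : k ≤ n := by omega
    have hkn : k < n := by omega
    have hcl : cmi p (pastN Y₁ (k+1) hk) V Z
        = cmi p (fun ω => (pastN Y₁ k hk' ω, Y₁ ⟨k, hkn⟩ ω)) V Z := by
      apply cmi_congr_left (fun x : (Fin k → 𝒴₁) × 𝒴₁ => Fin.snoc x.1 x.2)
      · rintro ⟨u, a⟩ ⟨v, b⟩ h
        have h1 : a = b := by
          have := congrFun h (Fin.last k); simpa using this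
        have h2 : u = v := by
          funext i
          have := congrFun h i.castSucc; simpa using this
        simp [h1, h2]
      · intro ω
        funext j
        refine Fin.lastCases ?_ ?_ j
        · simp [Fin.snoc_last, pastN]
        · intro i
          simp [Fin.snoc_castSucc, pastN]
    rw [hcl, cmi_chain, ih hk', Finset.sum_range_succ, dif_pos hkn]
  
lemma fut_expand (Y : Fin n → Ω → 𝒴) {𝒱 ζ : Type*} [Fintype 𝒱] [Fintype ζ]
    (V : Ω → 𝒱) (Z : Ω → ζ) :
    ∀ (m k : ℕ), n - k = m → cmi p (futN Y k) V Z
      = ∑ i ∈ Finset.Ico k n, (if h : i < n then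
          cmi p (Y ⟨i, h⟩) V (fun ω => (Z ω, futN Y (i+1) ω)) else 0) := by
  intro m
  induction m with
  | zero =>
    intro k hk
    rw [Finset.Ico_eq_empty (by omega), Finset.sum_empty]
    exact cmi_zero_of_fn (fun _ => fun j => (by omega : ¬ (j.1 < n - k)).elim j.2)
      (fun ω => funext fun j => (by omega : ¬ (j.1 < n - k)).elim j.2)
  | succ m ih =>
    intro k hk
    have hkn : k < n := by omega
    have hcl : cmi p (futN Y k) V Z
        = cmi p (fun ω => (futN Y (k+1) ω, Y ⟨k, hkn⟩ ω)) V Z := by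
      apply cmi_congr_left (fun x : (Fin (n - (k+1)) → 𝒴) × 𝒴 =>
        (fun j : Fin (n - k) => if h : j.1 = 0 then x.2 else x.1 ⟨j.1 - 1, by omega⟩))
      · rintro ⟨u, a⟩ ⟨v, b⟩ h
        have h1 : a = b := by
          have := congrFun h ⟨0, by omega⟩; simpa using this
        have h2 : u = v := by
          funext i
          have := congrFun h ⟨i.1 + 1, by omega⟩
          simpa using this
        simp [h1, h2]
      · intro ω
        funext j
        by_cases h : j.1 = 0
        · simp only [h, dif_pos]
          show Y ⟨k + j.1, _⟩ ω = Y ⟨k, hkn⟩ ω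
          congr 1
          exact Fin.ext (by simp [h])
        · simp only [dif_neg h]
          show Y ⟨k + j.1, _⟩ ω = Y ⟨(k+1) + (j.1 - 1), _⟩ ω
          congr 1
          exact Fin.ext (by simp; omega)
    rw [hcl, cmi_chain, ih (k+1) (by omega), Finset.sum_eq_sum_Ico_succ_bot hkn, dif_pos hkn]
    ring

end Tele
lemma sum_triangle {n : ℕ} (f : ℕ → ℕ → ℝ) :
    ∑ i ∈ Finset.range n, ∑ j ∈ Finset.range i, f i j
      = ∑ j ∈ Finset.range n, ∑ i ∈ Finset.Ico (j+1) n, f i j := by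
  apply Finset.sum_comm'
  intro i j
  simp only [Finset.mem_range, Finset.mem_Ico]
  omega



section Stmt19

variable {Ω 𝒲 𝒳 𝒳₁ 𝒴 𝒴₁ : Type*} [Fintype Ω]
  [Fintype 𝒲] [Fintype 𝒳] [Fintype 𝒳₁] [Fintype 𝒴] [Fintype 𝒴₁]

/-- The past received sequence `Y₁^{i−1}` at the relay. -/
def pastSeq {n : ℕ} (Y₁ : Fin n → Ω → 𝒴₁) (i : Fin n) : Ω → (Fin i.1 → 𝒴₁) :=
  fun ω j => Y₁ ⟨j.1, j.2.trans i.2⟩ ω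

/-- The future received sequence `Y_{i+1}^n` at the destination. -/
def futureSeq {n : ℕ} (Y : Fin n → Ω → 𝒴) (i : Fin n) : Ω → (Fin (n - (i.1 + 1)) → 𝒴) :=
  fun ω j => Y ⟨i.1 + 1 + j.1, by have := j.2; omega⟩ ω

/-- The auxiliary random variable `T_i = (W, Y_{i+1}^n, Y₁^{i−1})`. -/
def Taux {n : ℕ} (W : Ω → 𝒲) (Y : Fin n → Ω → 𝒴) (Y₁ : Fin n → Ω → 𝒴₁) (i : Fin n) :
    Ω → 𝒲 × (Fin (n - (i.1 + 1)) → 𝒴) × (Fin i.1 → 𝒴₁) :=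
  fun ω => (W ω, futureSeq Y i ω, pastSeq Y₁ i ω)

/-- The canonical double-sum term. -/
noncomputable def Dterm {n : ℕ} (p : Ω → ℝ) (W : Ω → 𝒲) (Y : Fin n → Ω → 𝒴)
    (Y₁ : Fin n → Ω → 𝒴₁) (i j : ℕ) : ℝ :=
  if h : i < n ∧ j < n then
    cmi p (Y₁ ⟨j, h.2⟩) (Y ⟨i, h.1⟩)
      (fun ω => ((W ω, futN Y (i+1) ω), pastN Y₁ j h.2.le ω))
  else 0

lemma csiszar_left {n : ℕ} (p : Ω → ℝ) (W : Ω → 𝒲) (Y : Fin n → Ω → 𝒴)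
    (Y₁ : Fin n → Ω → 𝒴₁) (i : Fin n) :
    cmi p (pastSeq Y₁ i) (Y i) (fun ω => (W ω, futureSeq Y i ω))
      = ∑ j ∈ Finset.range i.1, Dterm p W Y Y₁ i.1 j := by
  have h0 : cmi p (pastSeq Y₁ i) (Y i) (fun ω => (W ω, futureSeq Y i ω))
      = cmi p (pastN Y₁ i.1 i.2.le) (Y i) (fun ω => (W ω, futN Y (i.1+1) ω)) := rfl
  rw [h0, past_expand Y₁ (Y i) (fun ω => (W ω, futN Y (i.1+1) ω)) i.1 i.2.le]
  apply Finset.sum_congr rfl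
  intro j hj
  have hjn : j < n := lt_trans (Finset.mem_range.1 hj) i.2
  rw [dif_pos hjn]
  unfold Dterm
  rw [dif_pos ⟨i.2, hjn⟩]

lemma csiszar_right {n : ℕ} (p : Ω → ℝ) (W : Ω → 𝒲) (Y : Fin n → Ω → 𝒴)
    (Y₁ : Fin n → Ω → 𝒴₁) (j : Fin n) :
    cmi p (futureSeq Y j) (Y₁ j) (fun ω => (W ω, pastSeq Y₁ j ω))
      = ∑ i ∈ Finset.Ico (j.1+1) n, Dterm p W Y Y₁ i j.1 := by
  have h0 : cmi p (futureSeq Y j) (Y₁ j) (fun ω => (W ω, pastSeq Y₁ j ω))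
      = cmi p (futN Y (j.1+1)) (Y₁ j) (fun ω => (W ω, pastN Y₁ j.1 j.2.le ω)) := rfl
  rw [h0, fut_expand Y (Y₁ j) (fun ω => (W ω, pastN Y₁ j.1 j.2.le ω)) (n - (j.1+1)) (j.1+1) rfl]
  apply Finset.sum_congr rfl
  intro i hi
  have hin : i < n := (Finset.mem_Ico.1 hi).2
  rw [dif_pos hin]
  unfold Dterm
  rw [dif_pos ⟨hin, j.2⟩]
  rw [cmi_symm]
  exact (cmi_congr_right
    (Z := fun ω => ((W ω, pastN Y₁ j.1 j.2.le ω), futN Y (i+1) ω))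
    (Z' := fun ω => ((W ω, futN Y (i+1) ω), pastN Y₁ j.1 j.2.le ω))
    (fun x => ((x.1.1, x.2), x.1.2))
    (fun x y hxy => by simp [Prod.ext_iff] at hxy ⊢; tauto)
    (fun ω => rfl)).symm

lemma csiszar {n : ℕ} (p : Ω → ℝ) (W : Ω → 𝒲) (Y : Fin n → Ω → 𝒴)
    (Y₁ : Fin n → Ω → 𝒴₁) :
    ∑ i : Fin n, cmi p (pastSeq Y₁ i) (Y i) (fun ω => (W ω, futureSeq Y i ω))
      = ∑ i : Fin n, cmi p (futureSeq Y i) (Y₁ i) (fun ω => (W ω, pastSeq Y₁ i ω)) := by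
  rw [Finset.sum_congr rfl (fun i _ => csiszar_left p W Y Y₁ i),
      Finset.sum_congr rfl (fun i _ => csiszar_right p W Y Y₁ i)]
  rw [Fin.sum_univ_eq_sum_range (fun m => ∑ j ∈ Finset.range m, Dterm p W Y Y₁ m j),
      Fin.sum_univ_eq_sum_range (fun m => ∑ i ∈ Finset.Ico (m+1) n, Dterm p W Y Y₁ i m)]
  exact sum_triangle (Dterm p W Y Y₁)


lemma per_i {n : ℕ} (p : Ω → ℝ) (hp : IsPMF p)
    (W : Ω → 𝒲)
    (X : Fin n → Ω → 𝒳) (X₁ : Fin n → Ω → 𝒳₁) (Y : Fin n → Ω → 𝒴) (Y₁ : Fin n → Ω → 𝒴₁)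
    (e : Fin n → 𝒲 → 𝒳) (hX : ∀ i ω, X i ω = e i (W ω))
    (f : (i : Fin n) → (Fin i.1 → 𝒴₁) → 𝒳₁) (hX₁ : ∀ i ω, X₁ i ω = f i (pastSeq Y₁ i ω))
    (hMemoryless : ∀ i : Fin n,
      Markov p (fun ω => (W ω, pastSeq Y₁ i ω)) (fun ω => (X i ω, X₁ i ω)) (Y₁ i))
    (hTMarkov : ∀ i : Fin n,
      Markov p (Taux W Y Y₁ i) (fun ω => (X i ω, X₁ i ω, Y₁ i ω)) (Y i))
    (i : Fin n) :
    mi p (fun ω => (W ω, futureSeq Y i ω)) (Y i)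
      = mi p (fun ω => (X i ω, X₁ i ω)) (Y i)
        - cmi p (Taux W Y Y₁ i) (Y₁ i) (fun ω => (X i ω, X₁ i ω, Y i ω))
        + cmi p (futureSeq Y i) (Y₁ i) (fun ω => (W ω, pastSeq Y₁ i ω))
        - cmi p (pastSeq Y₁ i) (Y i) (fun ω => (W ω, futureSeq Y i ω)) := by
  -- S1 : I(T; Y_i) = I(W,F;Y_i) + I(P;Y_i | W,F)
  have S1 : mi p (Taux W Y Y₁ i) (Y i)
      = mi p (fun ω => (W ω, futureSeq Y i ω)) (Y i)
        + cmi p (pastSeq Y₁ i) (Y i) (fun ω => (W ω, futureSeq Y i ω)) := by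
    rw [← mi_chain (fun ω => (W ω, futureSeq Y i ω)) (pastSeq Y₁ i) (Y i)]
    exact mi_congr_left (fun x : (𝒲 × (Fin (n - (i.1+1)) → 𝒴)) × (Fin i.1 → 𝒴₁) =>
        (x.1.1, x.1.2, x.2))
      (fun x y hxy => by simp [Prod.ext_iff] at hxy ⊢; tauto)
      (fun ω => rfl)
  -- S2 : I(T; Y_i) = I(X,X₁;Y_i) + I(T;Y_i | X,X₁)
  have S2 : mi p (Taux W Y Y₁ i) (Y i)
      = mi p (fun ω => (X i ω, X₁ i ω)) (Y i)
        + cmi p (Taux W Y Y₁ i) (Y i) (fun ω => (X i ω, X₁ i ω)) := by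
    rw [← mi_chain (fun ω => (X i ω, X₁ i ω)) (Taux W Y Y₁ i) (Y i)]
    exact (mi_congr_left
      (g := fun t : 𝒲 × (Fin (n - (i.1+1)) → 𝒴) × (Fin i.1 → 𝒴₁) =>
        ((e i t.1, f i t.2.2), t))
      (fun x y hxy => congrArg Prod.snd hxy)
      (fun ω => by simp [Taux, Prod.ext_iff, hX i ω, hX₁ i ω, pastSeq])).symm
  -- S3 : chain rule both ways on I(T; Y_i, Y₁_i | X,X₁)
  have C1 : cmi p (Taux W Y Y₁ i) (fun ω => (Y i ω, Y₁ i ω)) (fun ω => (X i ω, X₁ i ω))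
      = cmi p (Taux W Y Y₁ i) (Y i) (fun ω => (X i ω, X₁ i ω))
        + cmi p (Taux W Y Y₁ i) (Y₁ i) (fun ω => (X i ω, X₁ i ω, Y i ω)) := by
    rw [cmi_chain2 (Taux W Y Y₁ i) (Y i) (Y₁ i) (fun ω => (X i ω, X₁ i ω))]
    congr 1
    exact cmi_congr_right
      (Z := fun ω => (X i ω, X₁ i ω, Y i ω))
      (Z' := fun ω => (Y i ω, X i ω, X₁ i ω))
      (fun x : 𝒳 × 𝒳₁ × 𝒴 => (x.2.2, x.1, x.2.1))
      (fun x y hxy => by simp [Prod.ext_iff] at hxy ⊢; tauto)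
      (fun ω => rfl)
  have C2 : cmi p (Taux W Y Y₁ i) (fun ω => (Y i ω, Y₁ i ω)) (fun ω => (X i ω, X₁ i ω))
      = cmi p (Taux W Y Y₁ i) (Y₁ i) (fun ω => (X i ω, X₁ i ω)) := by
    have hswap : cmi p (Taux W Y Y₁ i) (fun ω => (Y i ω, Y₁ i ω)) (fun ω => (X i ω, X₁ i ω))
        = cmi p (Taux W Y Y₁ i) (fun ω => (Y₁ i ω, Y i ω)) (fun ω => (X i ω, X₁ i ω)) :=
      cmi_congr_mid (B := fun ω => (Y₁ i ω, Y i ω)) (B' := fun ω => (Y i ω, Y₁ i ω))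
        (fun x : 𝒴₁ × 𝒴 => (x.2, x.1))
        (fun x y hxy => by simp [Prod.ext_iff] at hxy ⊢; tauto)
        (fun ω => rfl)
    rw [hswap, cmi_chain2 (Taux W Y Y₁ i) (Y₁ i) (Y i) (fun ω => (X i ω, X₁ i ω))]
    have hz : cmi p (Taux W Y Y₁ i) (Y i) (fun ω => (Y₁ i ω, X i ω, X₁ i ω)) = 0 := by
      rw [cmi_congr_right
        (Z := fun ω => (X i ω, X₁ i ω, Y₁ i ω))
        (Z' := fun ω => (Y₁ i ω, X i ω, X₁ i ω))
        (fun x : 𝒳 × 𝒳₁ × 𝒴₁ => (x.2.2, x.1, x.2.1))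
        (fun x y hxy => by simp [Prod.ext_iff] at hxy ⊢; tauto)
        (fun ω => rfl)]
      exact cmi_zero_of_markov hp (hTMarkov i)
    rw [hz, add_zero]
  -- S5 : I(T;Y₁_i | X,X₁) = I(F;Y₁_i | W,P)
  have S5 : cmi p (Taux W Y Y₁ i) (Y₁ i) (fun ω => (X i ω, X₁ i ω))
      = cmi p (futureSeq Y i) (Y₁ i) (fun ω => (W ω, pastSeq Y₁ i ω)) := by
    have h1 : cmi p (Taux W Y Y₁ i) (Y₁ i) (fun ω => (X i ω, X₁ i ω))
        = cmi p (fun ω => ((W ω, pastSeq Y₁ i ω), futureSeq Y i ω)) (Y₁ i)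
            (fun ω => (X i ω, X₁ i ω)) :=
      cmi_congr_left
        (g := fun x : (𝒲 × (Fin i.1 → 𝒴₁)) × (Fin (n - (i.1+1)) → 𝒴) =>
          (x.1.1, x.2, x.1.2))
        (fun x y hxy => by simp [Prod.ext_iff] at hxy ⊢; tauto)
        (fun ω => rfl)
    rw [h1, cmi_chain (fun ω => (W ω, pastSeq Y₁ i ω)) (futureSeq Y i) (Y₁ i)
      (fun ω => (X i ω, X₁ i ω))]
    rw [cmi_zero_of_markov hp (hMemoryless i), zero_add]
    exact cmi_drop_left (k := fun wp : 𝒲 × (Fin i.1 → 𝒴₁) => (e i wp.1, f i wp.2))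
      (fun ω => by simp [hX i ω, hX₁ i ω, pastSeq, Prod.ext_iff])
  linarith [S1, S2, C1, C2, S5]


/-- **Key converse identity of the extended cut-set bound.**
With `W` uniform, `X_i` a function of `W`, `X_{1,i}` a function of `Y₁^{i−1}`, the memoryless
Markov chains `(W, Y₁^{i−1}) − (X_i, X_{1,i}) − Y_{1,i}` and `T_i − (X_i,X_{1,i},Y_{1,i}) − Y_i`:
`Σᵢ I(W, Y_{i+1}^n; Y_i) = Σᵢ I(X_i X_{1,i}; Y_i) − Σᵢ I(T_i; Y_{1,i} | X_i, X_{1,i}, Y_i)`,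
and consequently `Σᵢ I(X_{1,i}; Y_i | X_i) ≥ Σᵢ I(T_i; Y_{1,i} | X_i, X_{1,i}, Y_i)`. -/
theorem stmt_19 {n : ℕ} (p : Ω → ℝ) (hp : IsPMF p)
    (W : Ω → 𝒲) (hW : ∀ w, pr p W w = 1 / Fintype.card 𝒲)
    (X : Fin n → Ω → 𝒳) (X₁ : Fin n → Ω → 𝒳₁) (Y : Fin n → Ω → 𝒴) (Y₁ : Fin n → Ω → 𝒴₁)
    (e : Fin n → 𝒲 → 𝒳) (hX : ∀ i ω, X i ω = e i (W ω))
    (f : (i : Fin n) → (Fin i.1 → 𝒴₁) → 𝒳₁) (hX₁ : ∀ i ω, X₁ i ω = f i (pastSeq Y₁ i ω))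
    (hMemoryless : ∀ i : Fin n,
      Markov p (fun ω => (W ω, pastSeq Y₁ i ω)) (fun ω => (X i ω, X₁ i ω)) (Y₁ i))
    (hTMarkov : ∀ i : Fin n,
      Markov p (Taux W Y Y₁ i) (fun ω => (X i ω, X₁ i ω, Y₁ i ω)) (Y i)) :
    (∑ i : Fin n, mi p (fun ω => (W ω, futureSeq Y i ω)) (Y i)
        = ∑ i : Fin n, mi p (fun ω => (X i ω, X₁ i ω)) (Y i)
          - ∑ i : Fin n, cmi p (Taux W Y Y₁ i) (Y₁ i) (fun ω => (X i ω, X₁ i ω, Y i ω))) ∧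
    ∑ i : Fin n, cmi p (X₁ i) (Y i) (X i)
      ≥ ∑ i : Fin n, cmi p (Taux W Y Y₁ i) (Y₁ i) (fun ω => (X i ω, X₁ i ω, Y i ω)) := by
  have goal1 : ∑ i : Fin n, mi p (fun ω => (W ω, futureSeq Y i ω)) (Y i)
      = ∑ i : Fin n, mi p (fun ω => (X i ω, X₁ i ω)) (Y i)
        - ∑ i : Fin n, cmi p (Taux W Y Y₁ i) (Y₁ i) (fun ω => (X i ω, X₁ i ω, Y i ω)) := by
    rw [Finset.sum_congr rfl
      (fun i _ => per_i p hp W X X₁ Y Y₁ e hX f hX₁ hMemoryless hTMarkov i)]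
    have hc := csiszar p W Y Y₁
    rw [Finset.sum_sub_distrib, Finset.sum_add_distrib, Finset.sum_sub_distrib]
    rw [hc]
    ring
  refine ⟨goal1, ?_⟩
  have h2 : ∀ i : Fin n, mi p (fun ω => (X i ω, X₁ i ω)) (Y i)
      - mi p (fun ω => (W ω, futureSeq Y i ω)) (Y i) ≤ cmi p (X₁ i) (Y i) (X i) := by
    intro i
    have e1 : mi p (fun ω => (X i ω, X₁ i ω)) (Y i)
        = mi p (X i) (Y i) + cmi p (X₁ i) (Y i) (X i) := mi_chain (X i) (X₁ i) (Y i)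
    have e2 : mi p (fun ω => (W ω, futureSeq Y i ω)) (Y i)
        = mi p (X i) (Y i) + cmi p (fun ω => (W ω, futureSeq Y i ω)) (Y i) (X i) := by
      rw [← mi_chain (X i) (fun ω => (W ω, futureSeq Y i ω)) (Y i)]
      exact (mi_congr_left
        (g := fun wf : 𝒲 × (Fin (n - (i.1+1)) → 𝒴) => (e i wf.1, wf))
        (fun x y hxy => congrArg Prod.snd hxy)
        (fun ω => by simp [hX i ω, Prod.ext_iff])).symm
    have e3 : 0 ≤ cmi p (fun ω => (W ω, futureSeq Y i ω)) (Y i) (X i) :=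
      cmi_nonneg hp _ _ _
    linarith
  have h3 := Finset.sum_le_sum (fun i (_ : i ∈ Finset.univ) => h2 i)
  rw [Finset.sum_sub_distrib] at h3
  linarith [goal1, h3]

end Stmt19
end
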